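/- arXiv:2505.05167 — 3 statements merged into one kernel-verified Lean document; each statement's English description precedes it below -/
import Mathlib

section
/- Let ω₁, ω₂ solve the 2D semidirect product Euler–Euler system ∂ₜω₁ + u₁·∇ω₁ + u₂·∇ω₂ = 0, ∂ₜω₂ + (u₁+u₂)·∇ω₂ = 0 on the torus with divergence-free u₁, u₂. Then the sup norms satisfy ‖ω₂(t)‖_∞ ≤ ‖ω₂(0)‖_∞ and ‖ω₁(t)‖_∞ ≤ ‖ω₁(0)‖_∞ + 2‖ω₂(0)‖_∞ for all t ≥ 0. -/
open Set

/-- Divergence-free condition for a velocity field `v : ℝ × ℝ → ℝ × ℝ`. -/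
def DivFree (v : (ℝ × ℝ) → ℝ × ℝ) : Prop :=
  ∀ x : ℝ × ℝ,
    fderiv ℝ (fun y => (v y).1) x (1, 0) + fderiv ℝ (fun y => (v y).2) x (0, 1) = 0

/-- Doubly-periodic function on the plane, modelling a function on the torus `𝕋²`. -/
def DoublyPeriodic {E : Type*} (f : (ℝ × ℝ) → E) : Prop :=
  ∀ x y : ℝ, f (x + 1, y) = f (x, y) ∧ f (x, y + 1) = f (x, y)

lemma DoublyPeriodic.shift {E : Type*} {g : (ℝ × ℝ) → E} (hg : DoublyPeriodic g) :
    ∀ (m n : ℤ) (x y : ℝ), g (x + m, y + n) = g (x, y) := by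
  have hx : ∀ (m : ℤ) (x y : ℝ), g (x + m, y) = g (x, y) := by
    intro m
    induction m using Int.induction_on with
    | zero => simp
    | succ k ih =>
      intro x y
      push_cast
      rw [show x + ((k : ℝ) + 1) = (x + k) + 1 by ring, (hg (x + k) y).1]
      simpa using ih x y
    | pred k ih =>
      intro x y
      push_cast
      have h := (hg (x + (-(k : ℝ) - 1)) y).1
      rw [show x + (-(k : ℝ) - 1) + 1 = x + -(k : ℝ) by ring] at h
      rw [← h]
      simpa using ih x y
  have hy : ∀ (n : ℤ) (x y : ℝ), g (x, y + n) = g (x, y) := by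
    intro n
    induction n using Int.induction_on with
    | zero => simp
    | succ k ih =>
      intro x y
      push_cast
      rw [show y + ((k : ℝ) + 1) = (y + k) + 1 by ring, (hg x (y + k)).2]
      simpa using ih x y
    | pred k ih =>
      intro x y
      push_cast
      have h := (hg x (y + (-(k : ℝ) - 1))).2
      rw [show y + (-(k : ℝ) - 1) + 1 = y + -(k : ℝ) by ring] at h
      rw [← h]
      simpa using ih x y
  intro m n x y
  rw [hx m x (y + n), hy n x y]

lemma DoublyPeriodic.eq_fract {E : Type*} {g : (ℝ × ℝ) → E} (hg : DoublyPeriodic g)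
    (p : ℝ × ℝ) : g p = g (Int.fract p.1, Int.fract p.2) := by
  have h := hg.shift ⌊p.1⌋ ⌊p.2⌋ (Int.fract p.1) (Int.fract p.2)
  rw [show Int.fract p.1 + (⌊p.1⌋ : ℝ) = p.1 by rw [Int.fract]; ring,
    show Int.fract p.2 + (⌊p.2⌋ : ℝ) = p.2 by rw [Int.fract]; ring] at h
  rw [← h]

/-- Uniform bound for a continuous, space-periodic function on a time interval. -/
lemma bound_of_periodic {E : Type*} [NormedAddCommGroup E] (G : ℝ × (ℝ × ℝ) → E)
    (hG : Continuous G) (hper : ∀ t, DoublyPeriodic (fun p => G (t, p))) (T : ℝ) :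
    ∃ M : ℝ, 0 ≤ M ∧ ∀ t ∈ Icc 0 T, ∀ p, ‖G (t, p)‖ ≤ M := by
  set K : Set (ℝ × (ℝ × ℝ)) := Icc 0 T ×ˢ (Icc 0 1 ×ˢ Icc 0 1) with hK
  have hKc : IsCompact K := (isCompact_Icc.prod (isCompact_Icc.prod isCompact_Icc))
  obtain ⟨M, hM⟩ := (hKc.image hG.norm).bddAbove
  refine ⟨max M 0, le_max_right _ _, ?_⟩
  intro t ht p
  have h1 := (hper t).eq_fract p
  have hz : (t, ((Int.fract p.1 : ℝ), (Int.fract p.2 : ℝ))) ∈ K :=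
    ⟨ht, ⟨⟨Int.fract_nonneg _, (Int.fract_lt_one _).le⟩,
      ⟨Int.fract_nonneg _, (Int.fract_lt_one _).le⟩⟩⟩
  calc ‖G (t, p)‖ = ‖G (t, (Int.fract p.1, Int.fract p.2))‖ := by rw [h1]
    _ ≤ M := hM ⟨_, hz, rfl⟩
    _ ≤ max M 0 := le_max_left _ _

lemma bddAbove_abs_of_periodic (g : (ℝ × ℝ) → ℝ) (hg : Continuous g)
    (hper : DoublyPeriodic g) : BddAbove (Set.range fun p => |g p|) := by
  obtain ⟨M, _, h⟩ := bound_of_periodic (fun z => g z.2) (hg.comp continuous_snd)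
    (fun _ => hper) 0
  refine ⟨M, ?_⟩
  rintro _ ⟨p, rfl⟩
  simpa [Real.norm_eq_abs] using h 0 ⟨le_refl 0, le_refl 0⟩ p

section Slice

variable {E : Type*} [NormedAddCommGroup E] [NormedSpace ℝ E]

lemma hasDerivAt_slice (ω : ℝ → (ℝ × ℝ) → E) (hω : ContDiff ℝ (⊤ : ℕ∞) (Function.uncurry ω))
    (t : ℝ) (x : ℝ × ℝ) :
    HasDerivAt (fun s => ω s x) (fderiv ℝ (Function.uncurry ω) (t, x) (1, 0)) t := by
  have hγ : HasDerivAt (fun s : ℝ => (s, x)) ((1 : ℝ), (0 : ℝ × ℝ)) t :=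
    (hasDerivAt_id t).prodMk (hasDerivAt_const t x)
  exact ((hω.differentiable (by simp) (t, x)).hasFDerivAt).comp_hasDerivAt t hγ

lemma hasFDerivAt_slice (ω : ℝ → (ℝ × ℝ) → E) (hω : ContDiff ℝ (⊤ : ℕ∞) (Function.uncurry ω))
    (t : ℝ) (x : ℝ × ℝ) :
    HasFDerivAt (ω t)
      ((fderiv ℝ (Function.uncurry ω) (t, x)).comp (ContinuousLinearMap.inr ℝ ℝ (ℝ × ℝ))) x := by
  have hγ : HasFDerivAt (fun p : ℝ × ℝ => (t, p)) (ContinuousLinearMap.inr ℝ ℝ (ℝ × ℝ)) x :=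
    (hasFDerivAt_const t x).prodMk (hasFDerivAt_id x)
  exact ((hω.differentiable (by simp) (t, x)).hasFDerivAt).comp x hγ

lemma total_deriv_decomp (ω : ℝ → (ℝ × ℝ) → E) (hω : ContDiff ℝ (⊤ : ℕ∞) (Function.uncurry ω))
    (t : ℝ) (x : ℝ × ℝ) (b : ℝ × ℝ) :
    fderiv ℝ (Function.uncurry ω) (t, x) ((1 : ℝ), b)
      = deriv (fun s => ω s x) t + fderiv ℝ (ω t) x b := by
  have h1 := (hasDerivAt_slice ω hω t x).deriv
  have h2 := (hasFDerivAt_slice ω hω t x).fderiv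
  rw [show ((1 : ℝ), b) = ((1 : ℝ), (0 : ℝ × ℝ)) + ((0 : ℝ), b) by simp, map_add, h1, h2]
  simp

end Slice

/-- Transport maximum principle: if `∂ₜω + u·∇ω = 0` with smooth doubly periodic data,
then `|ω T x₀| ≤ ⨆ |ω 0|` for all `T ≥ 0`. -/
lemma transport_sup_bound (ω : ℝ → (ℝ × ℝ) → ℝ) (u : ℝ → (ℝ × ℝ) → ℝ × ℝ)
    (hω : ContDiff ℝ (⊤ : ℕ∞) (Function.uncurry ω)) (hu : ContDiff ℝ (⊤ : ℕ∞) (Function.uncurry u))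
    (hperω : ∀ t, DoublyPeriodic (ω t)) (hperu : ∀ t, DoublyPeriodic (u t))
    (heq : ∀ t x, deriv (fun s => ω s x) t + fderiv ℝ (ω t) x (u t x) = 0) :
    ∀ T : ℝ, 0 ≤ T → ∀ x₀ : ℝ × ℝ, |ω T x₀| ≤ ⨆ x : ℝ × ℝ, |ω 0 x| := by
  intro T hT x₀
  set U := Function.uncurry u with hUdef
  -- bound of u on [0,T] × plane
  obtain ⟨C, hC0, hC⟩ := bound_of_periodic U hu.continuous (fun t => hperu t) T
  -- the space-fderiv of U is doubly periodic in space
  have key : ∀ (c : ℝ × (ℝ × ℝ)), (∀ z, U (z + c) = U z) →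
      ∀ z, fderiv ℝ U (z + c) = fderiv ℝ U z := by
    intro c hc z
    have h1 : HasFDerivAt (fun w => U (w + c)) (fderiv ℝ U (z + c)) z := by
      have := ((hu.differentiable (by simp) (z + c)).hasFDerivAt).comp z
        ((hasFDerivAt_id z).add_const c)
      exact this
    have h2 : HasFDerivAt U (fderiv ℝ U (z + c)) z := by
      have he : (fun w => U (w + c)) = U := funext hc
      rwa [he] at h1
    exact h2.fderiv.symm
  have hDper : ∀ t : ℝ, DoublyPeriodic (fun p : ℝ × ℝ => fderiv ℝ U (t, p)) := by
    intro t x y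
    constructor
    · have := key ((0 : ℝ), ((1 : ℝ), (0 : ℝ))) (by
        rintro ⟨s, a, b⟩
        simpa [hUdef, Function.uncurry, Prod.ext_iff] using (hperu s a b).1) (t, (x, y))
      simpa using this
    · have := key ((0 : ℝ), ((0 : ℝ), (1 : ℝ))) (by
        rintro ⟨s, a, b⟩
        simpa [hUdef, Function.uncurry, Prod.ext_iff] using (hperu s a b).2) (t, (x, y))
      simpa using this
  -- uniform Lipschitz bound
  obtain ⟨L, hL0, hLb⟩ := bound_of_periodic (fun z => fderiv ℝ U z)
    (hu.continuous_fderiv (by simp)) hDper T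
  -- Lipschitz of u t on the relevant ball
  have hlip : ∀ t ∈ Icc (0:ℝ) T, LipschitzOnWith L.toNNReal (u t)
      (Metric.closedBall x₀ (C * T + 1)) := by
    intro t ht
    apply LipschitzOnWith.of_dist_le_mul
    intro p hp q hq
    have hder : ∀ x : ℝ × ℝ, HasFDerivWithinAt (u t)
        ((fderiv ℝ U (t, x)).comp (ContinuousLinearMap.inr ℝ ℝ (ℝ × ℝ))) univ x := fun x =>
      (hasFDerivAt_slice u hu t x).hasFDerivWithinAt
    have hbound : ∀ x : ℝ × ℝ,
        ‖(fderiv ℝ U (t, x)).comp (ContinuousLinearMap.inr ℝ ℝ (ℝ × ℝ))‖ ≤ L := by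
      intro x
      refine ContinuousLinearMap.opNorm_le_bound _ hL0 ?_
      intro b
      calc ‖(fderiv ℝ U (t, x)) ((0 : ℝ), b)‖
          ≤ ‖fderiv ℝ U (t, x)‖ * ‖((0 : ℝ), b)‖ := ContinuousLinearMap.le_opNorm _ _
        _ ≤ L * ‖b‖ := by
            apply mul_le_mul (hLb t ht x) _ (norm_nonneg _) hL0
            simp [Prod.norm_def]
    have := convex_univ.norm_image_sub_le_of_norm_hasFDerivWithin_le
      (fun x _ => hder x) (fun x _ => hbound x) (mem_univ q) (mem_univ p)
    rw [dist_eq_norm, dist_eq_norm, Real.coe_toNNReal L hL0]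
    exact this
  -- Picard–Lindelöf backwards from time T
  have hpl : IsPicardLindelof (fun t x => u t x) (tmin := 0) (tmax := T) ⟨T, hT, le_rfl⟩ x₀
      ⟨C * T + 1, by have := mul_nonneg hC0 hT; linarith⟩ 0 ⟨C, hC0⟩ L.toNNReal :=
    { lipschitzOnWith := hlip
      continuousOn := fun x _ =>
        (hu.continuous.comp (continuous_id.prodMk continuous_const)).continuousOn
      norm_le := fun t ht x _ => hC t ht x
      mul_max_le := by
        show C * max (T - T) (T - 0) ≤ (C * T + 1) - ((0 : NNReal) : ℝ)
        rw [sub_self, sub_zero, NNReal.coe_zero, sub_zero, max_eq_right hT]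
        linarith }
  obtain ⟨f, hfT, hf'⟩ : ∃ f : ℝ → ℝ × ℝ, f T = x₀ ∧
      ∀ t ∈ Icc 0 T, HasDerivWithinAt f (u t (f t)) (Icc 0 T) t :=
    hpl.exists_eq_forall_mem_Icc_hasDerivWithinAt₀
  -- ω is constant along the characteristic
  set g : ℝ → ℝ := fun s => ω s (f s) with hgdef
  have hg0 : ∀ s ∈ Icc (0:ℝ) T, HasDerivWithinAt g 0 (Icc 0 T) s := by
    intro s hs
    have hγ : HasDerivWithinAt (fun s => (s, f s)) ((1 : ℝ), u s (f s)) (Icc 0 T) s :=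
      (hasDerivWithinAt_id s _).prodMk (hf' s hs)
    have htot := ((hω.differentiable (by simp) ((s, f s))).hasFDerivAt).comp_hasDerivWithinAt s hγ
    rwa [total_deriv_decomp ω hω s (f s) (u s (f s)), heq s (f s)] at htot
  have hcont : ContinuousOn g (Icc 0 T) := fun s hs => (hg0 s hs).continuousWithinAt
  have hconst := constant_of_has_deriv_right_zero hcont (fun s hs =>
    (hg0 s (mem_Icc_of_Ico hs)).mono_of_mem_nhdsWithin (Icc_mem_nhdsGE_of_mem hs))
  have hgT : g T = g 0 := hconst T ⟨hT, le_rfl⟩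
  have hx : ω T x₀ = ω 0 (f 0) := by
    have : g T = ω T x₀ := by rw [hgdef]; simp [hfT]
    rw [← this, hgT]
  rw [hx]
  exact le_ciSup (bddAbove_abs_of_periodic (ω 0)
    (hω.continuous.comp (continuous_const.prodMk continuous_id)) (hperω 0)) (f 0)

theorem sdp_euler_euler_sup_bound
    (ω₁ ω₂ : ℝ → (ℝ × ℝ) → ℝ) (u₁ u₂ : ℝ → (ℝ × ℝ) → ℝ × ℝ)
    (hω₁ : ContDiff ℝ (⊤ : ℕ∞) (Function.uncurry ω₁)) (hω₂ : ContDiff ℝ (⊤ : ℕ∞) (Function.uncurry ω₂))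
    (hu₁ : ContDiff ℝ (⊤ : ℕ∞) (Function.uncurry u₁)) (hu₂ : ContDiff ℝ (⊤ : ℕ∞) (Function.uncurry u₂))
    (hper₁ : ∀ t, DoublyPeriodic (ω₁ t)) (hper₂ : ∀ t, DoublyPeriodic (ω₂ t))
    (hperu₁ : ∀ t, DoublyPeriodic (u₁ t)) (hperu₂ : ∀ t, DoublyPeriodic (u₂ t))
    (hdiv₁ : ∀ t, DivFree (u₁ t)) (hdiv₂ : ∀ t, DivFree (u₂ t))
    (heq₁ : ∀ t x, deriv (fun s => ω₁ s x) t
      + fderiv ℝ (ω₁ t) x (u₁ t x) + fderiv ℝ (ω₂ t) x (u₂ t x) = 0)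
    (heq₂ : ∀ t x, deriv (fun s => ω₂ s x) t
      + fderiv ℝ (ω₂ t) x (u₁ t x + u₂ t x) = 0) :
    ∀ t : ℝ, 0 ≤ t →
      (⨆ x : ℝ × ℝ, |ω₂ t x|) ≤ (⨆ x : ℝ × ℝ, |ω₂ 0 x|) ∧
      (⨆ x : ℝ × ℝ, |ω₁ t x|) ≤ (⨆ x : ℝ × ℝ, |ω₁ 0 x|) + 2 * ⨆ x : ℝ × ℝ, |ω₂ 0 x| := by
  intro T hT
  -- ω₂ is transported by u₁ + u₂
  have h2 : ∀ x : ℝ × ℝ, |ω₂ T x| ≤ ⨆ x : ℝ × ℝ, |ω₂ 0 x| := by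
    refine transport_sup_bound ω₂ (fun t x => u₁ t x + u₂ t x) hω₂ ?_ hper₂ ?_ heq₂ T hT
    · have : Function.uncurry (fun t x => u₁ t x + u₂ t x)
          = fun z => Function.uncurry u₁ z + Function.uncurry u₂ z := rfl
      rw [this]
      exact hu₁.add hu₂
    · intro t x y
      constructor
      · show u₁ t (x + 1, y) + u₂ t (x + 1, y) = u₁ t (x, y) + u₂ t (x, y)
        rw [(hperu₁ t x y).1, (hperu₂ t x y).1]
      · show u₁ t (x, y + 1) + u₂ t (x, y + 1) = u₁ t (x, y) + u₂ t (x, y)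
        rw [(hperu₁ t x y).2, (hperu₂ t x y).2]
  -- ω₁ - ω₂ is transported by u₁
  set δ : ℝ → (ℝ × ℝ) → ℝ := fun t x => ω₁ t x - ω₂ t x with hδdef
  have hδsmooth : ContDiff ℝ (⊤ : ℕ∞) (Function.uncurry δ) := by
    have : Function.uncurry δ
        = fun z => Function.uncurry ω₁ z - Function.uncurry ω₂ z := rfl
    rw [this]
    exact hω₁.sub hω₂
  have hδ : ∀ x : ℝ × ℝ, |δ T x| ≤ ⨆ x : ℝ × ℝ, |δ 0 x| := by
    refine transport_sup_bound δ u₁ hδsmooth hu₁ ?_ hperu₁ ?_ T hT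
    · intro t x y
      exact ⟨by simp only [hδdef, (hper₁ t x y).1, (hper₂ t x y).1],
        by simp only [hδdef, (hper₁ t x y).2, (hper₂ t x y).2]⟩
    · intro t x
      have e1 := hasDerivAt_slice ω₁ hω₁ t x
      have e2 := hasDerivAt_slice ω₂ hω₂ t x
      have f1 := hasFDerivAt_slice ω₁ hω₁ t x
      have f2 := hasFDerivAt_slice ω₂ hω₂ t x
      have hδfun : (fun s => δ s x) = fun s => ω₁ s x - ω₂ s x := rfl
      have hδt : δ t = fun p => ω₁ t p - ω₂ t p := rfl
      have hδd := (e1.fun_sub e2).deriv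
      have hδf := (f1.fun_sub f2).fderiv
      rw [hδfun, hδt, hδd, hδf]
      simp only [ContinuousLinearMap.sub_apply, ContinuousLinearMap.coe_comp',
        Function.comp_apply, ContinuousLinearMap.inr_apply]
      have h1 := heq₁ t x
      have h2' := heq₂ t x
      rw [map_add] at h2'
      have g1 : fderiv ℝ (ω₁ t) x (u₁ t x)
          = fderiv ℝ (Function.uncurry ω₁) (t, x) ((0 : ℝ), u₁ t x) := by
        rw [f1.fderiv]
        simp
      have g2 : ∀ b, fderiv ℝ (ω₂ t) x b
          = fderiv ℝ (Function.uncurry ω₂) (t, x) ((0 : ℝ), b) := by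
        intro b
        rw [f2.fderiv]
        simp
      have d1 := e1.deriv
      have d2 := e2.deriv
      linarith [h1, h2', g1, g2 (u₁ t x), g2 (u₂ t x), d1, d2]
  -- nonnegativity / boundedness facts
  have hbdd₁ : BddAbove (Set.range fun p => |ω₁ 0 p|) :=
    bddAbove_abs_of_periodic (ω₁ 0)
      (hω₁.continuous.comp (continuous_const.prodMk continuous_id)) (hper₁ 0)
  have hbdd₂ : BddAbove (Set.range fun p => |ω₂ 0 p|) :=
    bddAbove_abs_of_periodic (ω₂ 0)
      (hω₂.continuous.comp (continuous_const.prodMk continuous_id)) (hper₂ 0)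
  have hδ0 : (⨆ x : ℝ × ℝ, |δ 0 x|) ≤ (⨆ x : ℝ × ℝ, |ω₁ 0 x|) + ⨆ x : ℝ × ℝ, |ω₂ 0 x| := by
    refine ciSup_le fun x => ?_
    calc |δ 0 x| ≤ |ω₁ 0 x| + |ω₂ 0 x| := abs_sub _ _
      _ ≤ (⨆ x : ℝ × ℝ, |ω₁ 0 x|) + ⨆ x : ℝ × ℝ, |ω₂ 0 x| :=
        add_le_add (le_ciSup hbdd₁ x) (le_ciSup hbdd₂ x)
  constructor
  · exact ciSup_le h2
  · refine ciSup_le fun x => ?_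
    have : |ω₁ T x| ≤ |δ T x| + |ω₂ T x| := by
      have : ω₁ T x = δ T x + ω₂ T x := by simp [hδdef]
      rw [this]
      exact abs_add_le _ _
    calc |ω₁ T x| ≤ |δ T x| + |ω₂ T x| := this
      _ ≤ ((⨆ x : ℝ × ℝ, |ω₁ 0 x|) + ⨆ x : ℝ × ℝ, |ω₂ 0 x|) + ⨆ x : ℝ × ℝ, |ω₂ 0 x| :=
        add_le_add ((hδ x).trans hδ0) (h2 x)
      _ = (⨆ x : ℝ × ℝ, |ω₁ 0 x|) + 2 * ⨆ x : ℝ × ℝ, |ω₂ 0 x| := by ring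
end

section
/- Let ω₁, ω₂ solve the 2D semidirect product Euler–Euler system on the torus 𝕋² with divergence-free u₁, u₂. Then for any smooth functions f, g : ℝ → ℝ, the quantity C_{f,g}(t) = ∫_{𝕋²} [f(ω₁(t,x) - ω₂(t,x)) + g(ω₂(t,x))] dx is constant in time. -/
open Set MeasureTheory

lemma slice1 {E : Type*} [NormedAddCommGroup E] [NormedSpace ℝ E]
    {F : ℝ → (ℝ × ℝ) → E} (h : ContDiff ℝ (⊤ : ℕ∞) (Function.uncurry F)) (t : ℝ) :
    ContDiff ℝ (⊤ : ℕ∞) (F t) :=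
  h.comp (contDiff_const.prodMk contDiff_id)

lemma intA1 (P : ℝ × ℝ → ℝ) (hP : ContDiff ℝ 1 P) (hper : DoublyPeriodic P) :
    ∫ x in (Icc (0:ℝ) 1 ×ˢ Icc (0:ℝ) 1), fderiv ℝ P x (1, 0) = 0 := by
  have hc : Continuous fun x => fderiv ℝ P x (1, 0) :=
    (hP.continuous_fderiv one_ne_zero).clm_apply continuous_const
  have hint : IntegrableOn (fun x => fderiv ℝ P x (1, 0))
      (Icc (0:ℝ) 1 ×ˢ Icc (0:ℝ) 1) := hc.continuousOn.integrableOn_compact (isCompact_Icc.prod isCompact_Icc)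
  rw [Measure.volume_eq_prod] at hint ⊢
  simp only [← Measure.prod_restrict, IntegrableOn] at hint ⊢
  rw [MeasureTheory.integral_prod_symm _ hint]
  have inner : ∀ y : ℝ, ∫ x in Icc (0:ℝ) 1, fderiv ℝ P (x, y) (1, 0) = 0 := by
    intro y
    have hd : ∀ x : ℝ, HasDerivAt (fun x => P (x, y)) (fderiv ℝ P (x, y) (1, 0)) x := by
      intro x
      have h1 : HasDerivAt (fun x : ℝ => (x, y)) ((1 : ℝ), (0 : ℝ)) x := by
        simpa using (hasDerivAt_id x).prodMk (hasDerivAt_const x y)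
      exact ((hP.differentiable one_ne_zero (x, y)).hasFDerivAt).comp_hasDerivAt x h1
    have hcont : Continuous fun x : ℝ => fderiv ℝ P (x, y) (1, 0) :=
      hc.comp (continuous_id.prodMk continuous_const)
    have := intervalIntegral.integral_eq_sub_of_hasDerivAt
      (f := fun x => P (x, y)) (a := (0:ℝ)) (b := 1)
      (fun x _ => hd x) (hcont.intervalIntegrable 0 1)
    have hper0 : P (1, y) = P (0, y) := by simpa using (hper 0 y).1
    rw [MeasureTheory.integral_Icc_eq_integral_Ioc,
      ← intervalIntegral.integral_of_le (by norm_num : (0:ℝ) ≤ 1)]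
    rw [this]
    simp [hper0]
  simp only [inner, integral_zero]

lemma intA2 (P : ℝ × ℝ → ℝ) (hP : ContDiff ℝ 1 P) (hper : DoublyPeriodic P) :
    ∫ x in (Icc (0:ℝ) 1 ×ˢ Icc (0:ℝ) 1), fderiv ℝ P x (0, 1) = 0 := by
  have hc : Continuous fun x => fderiv ℝ P x (0, 1) :=
    (hP.continuous_fderiv one_ne_zero).clm_apply continuous_const
  have hint : IntegrableOn (fun x => fderiv ℝ P x (0, 1))
      (Icc (0:ℝ) 1 ×ˢ Icc (0:ℝ) 1) :=
    hc.continuousOn.integrableOn_compact (isCompact_Icc.prod isCompact_Icc)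
  rw [Measure.volume_eq_prod] at hint ⊢
  rw [setIntegral_prod _ hint]
  have inner : ∀ x : ℝ, ∫ y in Icc (0:ℝ) 1, fderiv ℝ P (x, y) (0, 1) = 0 := by
    intro x
    have hd : ∀ y : ℝ, HasDerivAt (fun y => P (x, y)) (fderiv ℝ P (x, y) (0, 1)) y := by
      intro y
      have h1 : HasDerivAt (fun y : ℝ => (x, y)) ((0 : ℝ), (1 : ℝ)) y := by
        simpa using (hasDerivAt_const y x).prodMk (hasDerivAt_id y)
      exact ((hP.differentiable one_ne_zero (x, y)).hasFDerivAt).comp_hasDerivAt y h1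
    have hcont : Continuous fun y : ℝ => fderiv ℝ P (x, y) (0, 1) :=
      hc.comp (continuous_const.prodMk continuous_id)
    have := intervalIntegral.integral_eq_sub_of_hasDerivAt
      (f := fun y => P (x, y)) (a := (0:ℝ)) (b := 1)
      (fun y _ => hd y) (hcont.intervalIntegrable 0 1)
    have hper0 : P (x, 1) = P (x, 0) := by simpa using (hper x 0).2
    rw [MeasureTheory.integral_Icc_eq_integral_Ioc,
      ← intervalIntegral.integral_of_le (by norm_num : (0:ℝ) ≤ 1)]
    rw [this]
    simp [hper0]
  simp only [inner, integral_zero]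

lemma intB (h : ℝ × ℝ → ℝ) (v : ℝ × ℝ → ℝ × ℝ) (hh : ContDiff ℝ 1 h) (hv : ContDiff ℝ 1 v)
    (hph : DoublyPeriodic h) (hpv : DoublyPeriodic v)
    (hdv : ∀ x, fderiv ℝ (fun y => (v y).1) x (1,0) + fderiv ℝ (fun y => (v y).2) x (0,1) = 0) :
    ∫ x in (Icc (0:ℝ) 1 ×ˢ Icc (0:ℝ) 1), fderiv ℝ h x (v x) = 0 := by
  set P : ℝ × ℝ → ℝ := fun x => h x * (v x).1 with hPdef
  set Q : ℝ × ℝ → ℝ := fun x => h x * (v x).2 with hQdef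
  have hv1 : ContDiff ℝ 1 fun x => (v x).1 := contDiff_fst.comp hv
  have hv2 : ContDiff ℝ 1 fun x => (v x).2 := contDiff_snd.comp hv
  have hP : ContDiff ℝ 1 P := hh.mul hv1
  have hQ : ContDiff ℝ 1 Q := hh.mul hv2
  have hpP : DoublyPeriodic P := by
    intro x y
    constructor <;> simp [hPdef, (hph x y).1, (hph x y).2, (hpv x y).1, (hpv x y).2]
  have hpQ : DoublyPeriodic Q := by
    intro x y
    constructor <;> simp [hQdef, (hph x y).1, (hph x y).2, (hpv x y).1, (hpv x y).2]
  have key : ∀ x, fderiv ℝ h x (v x) = fderiv ℝ P x (1, 0) + fderiv ℝ Q x (0, 1) := by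
    intro x
    have dh : DifferentiableAt ℝ h x := (hh.differentiable one_ne_zero) x
    have dv1 : DifferentiableAt ℝ (fun y => (v y).1) x := (hv1.differentiable one_ne_zero) x
    have dv2 : DifferentiableAt ℝ (fun y => (v y).2) x := (hv2.differentiable one_ne_zero) x
    have e1 : fderiv ℝ P x (1, 0)
        = h x * fderiv ℝ (fun y => (v y).1) x (1, 0) + (v x).1 * fderiv ℝ h x (1, 0) := by
      rw [hPdef, fderiv_fun_mul dh dv1]; simp
    have e2 : fderiv ℝ Q x (0, 1)
        = h x * fderiv ℝ (fun y => (v y).2) x (0, 1) + (v x).2 * fderiv ℝ h x (0, 1) := by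
      rw [hQdef, fderiv_fun_mul dh dv2]; simp
    have hvx : v x = (v x).1 • ((1:ℝ), (0:ℝ)) + (v x).2 • ((0:ℝ), (1:ℝ)) := by
      ext <;> simp
    rw [e1, e2]
    have : fderiv ℝ h x (v x)
        = (v x).1 * fderiv ℝ h x (1, 0) + (v x).2 * fderiv ℝ h x (0, 1) := by
      conv_lhs => rw [hvx]
      rw [map_add, (fderiv ℝ h x).map_smul, (fderiv ℝ h x).map_smul, smul_eq_mul, smul_eq_mul]
    rw [this]
    linear_combination (-(h x)) * (hdv x)
  have hiP : IntegrableOn (fun x => fderiv ℝ P x (1, 0)) (Icc (0:ℝ) 1 ×ˢ Icc (0:ℝ) 1) :=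
    (((hP.continuous_fderiv one_ne_zero).clm_apply continuous_const)).continuousOn.integrableOn_compact
      (isCompact_Icc.prod isCompact_Icc)
  have hiQ : IntegrableOn (fun x => fderiv ℝ Q x (0, 1)) (Icc (0:ℝ) 1 ×ˢ Icc (0:ℝ) 1) :=
    (((hQ.continuous_fderiv one_ne_zero).clm_apply continuous_const)).continuousOn.integrableOn_compact
      (isCompact_Icc.prod isCompact_Icc)
  calc ∫ x in (Icc (0:ℝ) 1 ×ˢ Icc (0:ℝ) 1), fderiv ℝ h x (v x)
      = ∫ x in (Icc (0:ℝ) 1 ×ˢ Icc (0:ℝ) 1), (fderiv ℝ P x (1, 0) + fderiv ℝ Q x (0, 1)) := by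
        exact setIntegral_congr_fun (measurableSet_Icc.prod measurableSet_Icc)
          (fun x _ => key x)
    _ = (∫ x in (Icc (0:ℝ) 1 ×ˢ Icc (0:ℝ) 1), fderiv ℝ P x (1, 0))
        + ∫ x in (Icc (0:ℝ) 1 ×ˢ Icc (0:ℝ) 1), fderiv ℝ Q x (0, 1) := integral_add hiP hiQ
    _ = 0 := by rw [intA1 P hP hpP, intA2 Q hQ hpQ, add_zero]

open Metric in
lemma intC (F : ℝ → (ℝ × ℝ) → ℝ) (hF : ContDiff ℝ 1 (Function.uncurry F)) (t₀ : ℝ) :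
    HasDerivAt (fun t => ∫ x in (Icc (0:ℝ) 1 ×ˢ Icc (0:ℝ) 1), F t x)
      (∫ x in (Icc (0:ℝ) 1 ×ˢ Icc (0:ℝ) 1),
        fderiv ℝ (Function.uncurry F) (t₀, x) ((1 : ℝ), ((0:ℝ), (0:ℝ)))) t₀ := by
  set D : Set (ℝ × ℝ) := Icc (0:ℝ) 1 ×ˢ Icc (0:ℝ) 1 with hD
  have hDc : IsCompact D := isCompact_Icc.prod isCompact_Icc
  have hDm : MeasurableSet D := measurableSet_Icc.prod measurableSet_Icc
  have hFc : Continuous (Function.uncurry F) := hF.continuous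
  set F' : ℝ → (ℝ × ℝ) → ℝ :=
    fun t x => fderiv ℝ (Function.uncurry F) (t, x) ((1 : ℝ), ((0:ℝ), (0:ℝ))) with hF'
  have hF'c : Continuous fun p : ℝ × (ℝ × ℝ) => F' p.1 p.2 := by
    exact ((hF.continuous_fderiv one_ne_zero).clm_apply continuous_const)
  -- bound on compact set
  obtain ⟨C, hC⟩ := (IsCompact.exists_bound_of_continuousOn
    ((isCompact_Icc (a := t₀ - 1) (b := t₀ + 1)).prod hDc) hF'c.continuousOn)
  have hdiff : ∀ (x : ℝ × ℝ) (t : ℝ), HasDerivAt (fun s => F s x) (F' t x) t := by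
    intro x t
    have h1 : HasDerivAt (fun s : ℝ => (s, x)) ((1 : ℝ), ((0:ℝ), (0:ℝ))) t := by
      simpa [Prod.mk_zero_zero] using (hasDerivAt_id t).prodMk (hasDerivAt_const t x)
    exact ((hF.differentiable one_ne_zero (t, x)).hasFDerivAt).comp_hasDerivAt t h1
  have := hasDerivAt_integral_of_dominated_loc_of_deriv_le
    (μ := volume.restrict D) (F := F) (F' := F') (x₀ := t₀) (bound := fun _ => |C|)
    (s := ball t₀ 1) (ball_mem_nhds t₀ one_pos)
    (Filter.Eventually.of_forall fun t =>
      (hFc.comp (continuous_const.prodMk continuous_id)).aestronglyMeasurable)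
    ((hFc.comp (continuous_const.prodMk continuous_id)).continuousOn.integrableOn_compact
      hDc)
    ((hF'c.comp (continuous_const.prodMk continuous_id)).aestronglyMeasurable)
    ?_ ?_ ?_
  · exact this.2
  · refine (ae_restrict_mem hDm).mono fun x hx t ht => ?_
    have h1 : t ∈ Icc (t₀ - 1) (t₀ + 1) := by
      rw [mem_ball, Real.dist_eq, abs_sub_lt_iff] at ht
      constructor <;> linarith [ht.1, ht.2]
    calc ‖F' t x‖ ≤ C := hC (t, x) ⟨h1, hx⟩
      _ ≤ |C| := le_abs_self C
  · exact integrableOn_const hDc.measure_lt_top.ne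
  · exact Filter.Eventually.of_forall fun x t _ => hdiff x t

theorem sdp_euler_euler_casimirs
    (T : ℝ) (hT : 0 ≤ T)
    (ω₁ ω₂ : ℝ → (ℝ × ℝ) → ℝ) (u₁ u₂ : ℝ → (ℝ × ℝ) → ℝ × ℝ)
    (hω₁ : ContDiff ℝ (⊤ : ℕ∞) (Function.uncurry ω₁)) (hω₂ : ContDiff ℝ (⊤ : ℕ∞) (Function.uncurry ω₂))
    (hu₁ : ContDiff ℝ (⊤ : ℕ∞) (Function.uncurry u₁)) (hu₂ : ContDiff ℝ (⊤ : ℕ∞) (Function.uncurry u₂))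
    (hper₁ : ∀ t, DoublyPeriodic (ω₁ t)) (hper₂ : ∀ t, DoublyPeriodic (ω₂ t))
    (hperu₁ : ∀ t, DoublyPeriodic (u₁ t)) (hperu₂ : ∀ t, DoublyPeriodic (u₂ t))
    (hdiv₁ : ∀ t, DivFree (u₁ t)) (hdiv₂ : ∀ t, DivFree (u₂ t))
    (heq₁ : ∀ t x, deriv (fun s => ω₁ s x) t
      + fderiv ℝ (ω₁ t) x (u₁ t x) + fderiv ℝ (ω₂ t) x (u₂ t x) = 0)
    (heq₂ : ∀ t x, deriv (fun s => ω₂ s x) t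
      + fderiv ℝ (ω₂ t) x (u₁ t x + u₂ t x) = 0)
    (f g : ℝ → ℝ) (hf : ContDiff ℝ 1 f) (hg : ContDiff ℝ 1 g) :
    ∀ t ∈ Icc 0 T,
      (∫ x in (Icc (0:ℝ) 1 ×ˢ Icc (0:ℝ) 1),
        (f (ω₁ t x - ω₂ t x) + g (ω₂ t x))) =
      (∫ x in (Icc (0:ℝ) 1 ×ˢ Icc (0:ℝ) 1),
        (f (ω₁ 0 x - ω₂ 0 x) + g (ω₂ 0 x))) := by
  set D : Set (ℝ × ℝ) := Icc (0:ℝ) 1 ×ˢ Icc (0:ℝ) 1 with hD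
  have hDm : MeasurableSet D := measurableSet_Icc.prod measurableSet_Icc
  set F : ℝ → (ℝ × ℝ) → ℝ := fun t x => f (ω₁ t x - ω₂ t x) + g (ω₂ t x) with hFdef
  have hFsm : ContDiff ℝ 1 (Function.uncurry F) := by
    exact (hf.comp ((hω₁.of_le (by simp)).sub (hω₂.of_le (by simp)))).add
      (hg.comp (hω₂.of_le (by simp)))
  -- slice regularity
  have hω₁t : ∀ t, ContDiff ℝ (⊤ : ℕ∞) (ω₁ t) := fun t => slice1 hω₁ t
  have hω₂t : ∀ t, ContDiff ℝ (⊤ : ℕ∞) (ω₂ t) := fun t => slice1 hω₂ t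
  have hu₁t : ∀ t, ContDiff ℝ (⊤ : ℕ∞) (u₁ t) := fun t => slice1 hu₁ t
  have hu₂t : ∀ t, ContDiff ℝ (⊤ : ℕ∞) (u₂ t) := fun t => slice1 hu₂ t
  -- the key: derivative of the integral is zero everywhere
  have hmain : ∀ t : ℝ, HasDerivAt (fun t => ∫ x in D, F t x) 0 t := by
    intro t
    have hder := intC F hFsm t
    -- pointwise identity for the time derivative of the integrand
    have hpt : ∀ x : ℝ × ℝ,
        fderiv ℝ (Function.uncurry F) (t, x) ((1 : ℝ), ((0:ℝ), (0:ℝ)))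
        = -(fderiv ℝ (fun y => f (ω₁ t y - ω₂ t y)) x (u₁ t x)
            + fderiv ℝ (fun y => g (ω₂ t y)) x (u₁ t x + u₂ t x)) := by
      intro x
      -- time derivatives of ω₁, ω₂ slices
      have h1 : HasDerivAt (fun s => ω₁ s x) (deriv (fun s => ω₁ s x) t) t := by
        have : DifferentiableAt ℝ (fun s => ω₁ s x) t :=
          ((hω₁.differentiable (by simp)).comp
            (differentiable_id.prodMk (differentiable_const x))).differentiableAt
        exact this.hasDerivAt
      have h2 : HasDerivAt (fun s => ω₂ s x) (deriv (fun s => ω₂ s x) t) t := by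
        have : DifferentiableAt ℝ (fun s => ω₂ s x) t :=
          ((hω₂.differentiable (by simp)).comp
            (differentiable_id.prodMk (differentiable_const x))).differentiableAt
        exact this.hasDerivAt
      set a := deriv (fun s => ω₁ s x) t
      set b := deriv (fun s => ω₂ s x) t
      have hfθ : HasDerivAt (fun s => f (ω₁ s x - ω₂ s x))
          (deriv f (ω₁ t x - ω₂ t x) * (a - b)) t :=
        ((hf.differentiable one_ne_zero _).hasDerivAt).comp t (h1.sub h2)
      have hgψ : HasDerivAt (fun s => g (ω₂ s x)) (deriv g (ω₂ t x) * b) t :=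
        ((hg.differentiable one_ne_zero _).hasDerivAt).comp t h2
      have hFt : HasDerivAt (fun s => F s x)
          (deriv f (ω₁ t x - ω₂ t x) * (a - b) + deriv g (ω₂ t x) * b) t := hfθ.add hgψ
      -- the fderiv-applied-to-(1,0) is also a derivative of the same function
      have hFt' : HasDerivAt (fun s => F s x)
          (fderiv ℝ (Function.uncurry F) (t, x) ((1 : ℝ), ((0:ℝ), (0:ℝ)))) t := by
        have hl : HasDerivAt (fun s : ℝ => (s, x)) ((1 : ℝ), ((0:ℝ), (0:ℝ))) t := by
          simpa [Prod.mk_zero_zero] using (hasDerivAt_id t).prodMk (hasDerivAt_const t x)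
        exact ((hFsm.differentiable one_ne_zero (t, x)).hasFDerivAt).comp_hasDerivAt t hl
      rw [hFt'.unique hFt]
      -- spatial chain rule
      have dθ : DifferentiableAt ℝ (fun y => ω₁ t y - ω₂ t y) x :=
        ((hω₁t t).differentiable (by simp) x).sub ((hω₂t t).differentiable (by simp) x)
      have hcf : fderiv ℝ (fun y => f (ω₁ t y - ω₂ t y)) x
          = deriv f (ω₁ t x - ω₂ t x) • fderiv ℝ (fun y => ω₁ t y - ω₂ t y) x :=
        (((hf.differentiable one_ne_zero _).hasDerivAt).comp_hasFDerivAt x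
          dθ.hasFDerivAt).fderiv
      have hcg : fderiv ℝ (fun y => g (ω₂ t y)) x
          = deriv g (ω₂ t x) • fderiv ℝ (ω₂ t) x :=
        (((hg.differentiable one_ne_zero _).hasDerivAt).comp_hasFDerivAt x
          ((hω₂t t).differentiable (by simp) x).hasFDerivAt).fderiv
      have hsub : fderiv ℝ (fun y => ω₁ t y - ω₂ t y) x
          = fderiv ℝ (ω₁ t) x - fderiv ℝ (ω₂ t) x :=
        fderiv_sub ((hω₁t t).differentiable (by simp) x) ((hω₂t t).differentiable (by simp) x)
      have e1 := heq₁ t x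
      have e2 := heq₂ t x
      have hab : a - b = -(fderiv ℝ (ω₁ t) x (u₁ t x) - fderiv ℝ (ω₂ t) x (u₁ t x)) := by
        have hadd : fderiv ℝ (ω₂ t) x (u₁ t x + u₂ t x)
            = fderiv ℝ (ω₂ t) x (u₁ t x) + fderiv ℝ (ω₂ t) x (u₂ t x) := map_add _ _ _
        rw [hadd] at e2
        linarith
      have hb : b = -(fderiv ℝ (ω₂ t) x (u₁ t x + u₂ t x)) := by linarith
      rw [hab, hb, hcf, hcg, hsub]
      simp [smul_eq_mul]
      ring
    rw [setIntegral_congr_fun hDm (fun x _ => hpt x)] at hder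
    -- each of the two space integrals vanishes
    have hcω : ContDiff ℝ 1 fun y => f (ω₁ t y - ω₂ t y) :=
      hf.comp (((hω₁t t).sub (hω₂t t)).of_le (by simp))
    have hcg' : ContDiff ℝ 1 fun y => g (ω₂ t y) := hg.comp ((hω₂t t).of_le (by simp))
    have hint1 : ∫ x in D, fderiv ℝ (fun y => f (ω₁ t y - ω₂ t y)) x (u₁ t x) = 0 := by
      apply intB _ _ hcω ((hu₁t t).of_le (by simp))
      · intro x y
        refine ⟨?_, ?_⟩
        · show f (ω₁ t (x + 1, y) - ω₂ t (x + 1, y)) = _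
          rw [(hper₁ t x y).1, (hper₂ t x y).1]
        · show f (ω₁ t (x, y + 1) - ω₂ t (x, y + 1)) = _
          rw [(hper₁ t x y).2, (hper₂ t x y).2]
      · exact hperu₁ t
      · exact hdiv₁ t
    have hint2 : ∫ x in D, fderiv ℝ (fun y => g (ω₂ t y)) x (u₁ t x + u₂ t x) = 0 := by
      apply intB _ (fun x => u₁ t x + u₂ t x) hcg'
        (((hu₁t t).of_le (by simp)).add ((hu₂t t).of_le (by simp)))
      · intro x y
        refine ⟨?_, ?_⟩
        · show g (ω₂ t (x + 1, y)) = _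
          rw [(hper₂ t x y).1]
        · show g (ω₂ t (x, y + 1)) = _
          rw [(hper₂ t x y).2]
      · intro x y
        refine ⟨?_, ?_⟩
        · show u₁ t (x + 1, y) + u₂ t (x + 1, y) = _
          rw [(hperu₁ t x y).1, (hperu₂ t x y).1]
        · show u₁ t (x, y + 1) + u₂ t (x, y + 1) = _
          rw [(hperu₁ t x y).2, (hperu₂ t x y).2]
      · intro x
        have d11 : DifferentiableAt ℝ (fun y => (u₁ t y).1) x :=
          (contDiff_fst.comp ((hu₁t t).of_le (by simp))).differentiable one_ne_zero x
        have d21 : DifferentiableAt ℝ (fun y => (u₂ t y).1) x :=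
          (contDiff_fst.comp ((hu₂t t).of_le (by simp))).differentiable one_ne_zero x
        have d12 : DifferentiableAt ℝ (fun y => (u₁ t y).2) x :=
          (contDiff_snd.comp ((hu₁t t).of_le (by simp))).differentiable one_ne_zero x
        have d22 : DifferentiableAt ℝ (fun y => (u₂ t y).2) x :=
          (contDiff_snd.comp ((hu₂t t).of_le (by simp))).differentiable one_ne_zero x
        have r1 : (fun y => (u₁ t y + u₂ t y).1) = fun y => (u₁ t y).1 + (u₂ t y).1 := rfl
        have r2 : (fun y => (u₁ t y + u₂ t y).2) = fun y => (u₁ t y).2 + (u₂ t y).2 := rfl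
        rw [r1, r2, fderiv_fun_add d11 d21, fderiv_fun_add d12 d22]
        have := hdiv₁ t x
        have := hdiv₂ t x
        simp only [ContinuousLinearMap.add_apply]
        linarith
    -- integrability of the two pieces
    have hi1 : IntegrableOn (fun x => fderiv ℝ (fun y => f (ω₁ t y - ω₂ t y)) x (u₁ t x)) D := by
      refine (((hcω.continuous_fderiv one_ne_zero).clm_apply
        ((hu₁t t).continuous)).continuousOn).integrableOn_compact
        (isCompact_Icc.prod isCompact_Icc)
    have hi2 : IntegrableOn
        (fun x => fderiv ℝ (fun y => g (ω₂ t y)) x (u₁ t x + u₂ t x)) D := by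
      refine (((hcg'.continuous_fderiv one_ne_zero).clm_apply
        (((hu₁t t).continuous).add ((hu₂t t).continuous))).continuousOn).integrableOn_compact
        (isCompact_Icc.prod isCompact_Icc)
    have : (∫ x in D,
        -(fderiv ℝ (fun y => f (ω₁ t y - ω₂ t y)) x (u₁ t x)
          + fderiv ℝ (fun y => g (ω₂ t y)) x (u₁ t x + u₂ t x))) = 0 := by
      rw [integral_neg, integral_add hi1 hi2, hint1, hint2]
      simp
    rwa [this] at hder
  have hdiffΦ : Differentiable ℝ (fun t => ∫ x in D, F t x) :=
    fun t => (hmain t).differentiableAt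
  have hconst := is_const_of_deriv_eq_zero hdiffΦ (fun t => (hmain t).deriv)
  intro t _
  exact hconst t 0
end

section
/- Let H(u,v) = ½‖u‖²_{H¹_α} + ½‖v‖²_{H¹_β} with ‖u‖²_{H¹_α} = ∫_{S¹}(u² + α²u_x²)dx. If (u,v) are smooth periodic solutions of the semidirect-product CH–CH system ∂ₜm + (um)ₓ + uₓm + (vn)ₓ + vₓn = 0, m = u - α²u_{xx}, ∂ₜn + ((u+v)n)ₓ + (u+v)ₓn = 0, n = v - β²v_{xx}, then dH/dt = 0. -/
open intervalIntegral Real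

/-- The Camassa–Holm momentum `m = u - α² u_xx`. -/
noncomputable def chMom (α : ℝ) (u : ℝ → ℝ → ℝ) : ℝ → ℝ → ℝ :=
  fun t x => u t x - α ^ 2 * deriv (deriv (u t)) x

/-- The total energy `H(u,v) = ½‖u‖²_{H¹_α} + ½‖v‖²_{H¹_β}` over one period. -/
noncomputable def chEnergy (α β : ℝ) (u v : ℝ → ℝ → ℝ) : ℝ → ℝ :=
  fun t =>
    (1 / 2) * (∫ x in (0:ℝ)..(2 * π), (u t x ^ 2 + α ^ 2 * (deriv (u t) x) ^ 2)) +
    (1 / 2) * (∫ x in (0:ℝ)..(2 * π), (v t x ^ 2 + β ^ 2 * (deriv (v t) x) ^ 2))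


section auxlemmas

open MeasureTheory Metric


variable {F : ℝ × ℝ → ℝ}

lemma aux_hasDerivAt_snd (hF : ContDiff ℝ (⊤ : ℕ∞) F) (t x : ℝ) :
    HasDerivAt (fun y => F (t, y)) (fderiv ℝ F (t, x) (0, 1)) x := by
  have h1 : HasDerivAt (fun y => ((t, y) : ℝ × ℝ)) ((0 : ℝ), (1 : ℝ)) x :=
    (hasDerivAt_const x t).prodMk (hasDerivAt_id x)
  exact (hF.differentiable (by simp) (t, x)).hasFDerivAt.comp_hasDerivAt x h1

lemma aux_hasDerivAt_fst (hF : ContDiff ℝ (⊤ : ℕ∞) F) (t x : ℝ) :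
    HasDerivAt (fun s => F (s, x)) (fderiv ℝ F (t, x) (1, 0)) t := by
  have h1 : HasDerivAt (fun s => ((s, x) : ℝ × ℝ)) ((1 : ℝ), (0 : ℝ)) t :=
    (hasDerivAt_id t).prodMk (hasDerivAt_const t x)
  exact (hF.differentiable (by simp) (t, x)).hasFDerivAt.comp_hasDerivAt t h1

lemma aux_contDiff_fderiv (hF : ContDiff ℝ (⊤ : ℕ∞) F) (w : ℝ × ℝ) :
    ContDiff ℝ (⊤ : ℕ∞) (fun p => fderiv ℝ F p w) :=
  (hF.fderiv_right (by simp)).clm_apply contDiff_const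

lemma aux_schwarz (hF : ContDiff ℝ (⊤ : ℕ∞) F) (p v w : ℝ × ℝ) :
    fderiv ℝ (fun q => fderiv ℝ F q w) p v = fderiv ℝ (fun q => fderiv ℝ F q v) p w := by
  have hdf : ∀ q, HasFDerivAt F (fderiv ℝ F q) q := fun q =>
    (hF.differentiable (by simp) q).hasFDerivAt
  have hf' : HasFDerivAt (fderiv ℝ F) (fderiv ℝ (fderiv ℝ F) p) p :=
    ((hF.fderiv_right (m := (⊤ : ℕ∞)) (by simp)).differentiable (by simp) p).hasFDerivAt
  have hsym := second_derivative_symmetric hdf hf' v w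
  have key : ∀ z : ℝ × ℝ, fderiv ℝ (fun q => fderiv ℝ F q z) p
      = ((ContinuousLinearMap.apply ℝ ℝ z).comp (fderiv ℝ (fderiv ℝ F) p)) := by
    intro z
    have : HasFDerivAt (fun q => fderiv ℝ F q z)
        ((ContinuousLinearMap.apply ℝ ℝ z).comp (fderiv ℝ (fderiv ℝ F) p)) p :=
      (ContinuousLinearMap.apply ℝ ℝ z).hasFDerivAt.comp p hf'
    exact this.fderiv
  rw [key, key]
  simpa using hsym

lemma aux_param_deriv {G G' : ℝ → ℝ → ℝ} (hG : Continuous (Function.uncurry G))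
    (hG' : Continuous (Function.uncurry G'))
    (hd : ∀ t x, HasDerivAt (fun s => G s x) (G' t x) t) (t₀ : ℝ) :
    HasDerivAt (fun t => ∫ x in (0:ℝ)..(2 * π), G t x)
      (∫ x in (0:ℝ)..(2 * π), G' t₀ x) t₀ := by
  obtain ⟨C, hC⟩ := (isCompact_Icc.prod isCompact_Icc :
      IsCompact (Set.Icc (t₀ - 1) (t₀ + 1) ×ˢ Set.Icc (0:ℝ) (2 * π))).exists_bound_of_continuousOn
      hG'.continuousOn
  refine (intervalIntegral.hasDerivAt_integral_of_dominated_loc_of_deriv_le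
    (F := G) (F' := G') (bound := fun _ => C) (Metric.ball_mem_nhds t₀ one_pos) ?_ ?_ ?_ ?_ ?_ ?_).2
  · exact Filter.Eventually.of_forall fun t =>
      ((hG.comp (Continuous.prodMk_right t)) : Continuous fun y => G t y).aestronglyMeasurable
  · exact ((hG.comp (Continuous.prodMk_right t₀)) : Continuous fun y => G t₀ y).intervalIntegrable _ _
  · exact ((hG'.comp (Continuous.prodMk_right t₀)) : Continuous fun y => G' t₀ y).aestronglyMeasurable
  · refine Filter.Eventually.of_forall fun x hx t ht => hC (t, x) ?_
    constructor
    · have : |t - t₀| < 1 := by simpa [Real.dist_eq] using ht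
      constructor <;> [linarith [abs_lt.mp this |>.1]; linarith [abs_lt.mp this |>.2]]
    · have hx' : x ∈ Set.Ioc (0:ℝ) (2 * π) := by
        rwa [Set.uIoc_of_le (by positivity)] at hx
      exact ⟨hx'.1.le, hx'.2⟩
  · exact intervalIntegrable_const
  · exact Filter.Eventually.of_forall fun x _ t _ => hd t x

lemma aux_periodic_deriv {f g : ℝ → ℝ} {c : ℝ} (hfd : ∀ x, HasDerivAt f (g x) x)
    (hp : ∀ x, f (x + c) = f x) : ∀ x, g (x + c) = g x := by
  intro x
  have h1 : HasDerivAt (fun y => f (y + c)) (g (x + c) * 1) x :=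
    (hfd (x + c)).comp x ((hasDerivAt_id x).add_const c)
  rw [funext hp] at h1
  have := h1.unique (hfd x)
  linarith


end auxlemmas

noncomputable def pdx (F : ℝ × ℝ → ℝ) : ℝ × ℝ → ℝ := fun p => fderiv ℝ F p (0, 1)
noncomputable def pdt (F : ℝ × ℝ → ℝ) : ℝ × ℝ → ℝ := fun p => fderiv ℝ F p (1, 0)

section pd
variable {F : ℝ × ℝ → ℝ}

lemma pdx_contDiff (hF : ContDiff ℝ (⊤ : ℕ∞) F) : ContDiff ℝ (⊤ : ℕ∞) (pdx F) := aux_contDiff_fderiv hF _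
lemma pdt_contDiff (hF : ContDiff ℝ (⊤ : ℕ∞) F) : ContDiff ℝ (⊤ : ℕ∞) (pdt F) := aux_contDiff_fderiv hF _

lemma hasDerivAt_pdx (hF : ContDiff ℝ (⊤ : ℕ∞) F) (t x : ℝ) :
    HasDerivAt (fun y => F (t, y)) (pdx F (t, x)) x := aux_hasDerivAt_snd hF t x

lemma hasDerivAt_pdt (hF : ContDiff ℝ (⊤ : ℕ∞) F) (t x : ℝ) :
    HasDerivAt (fun s => F (s, x)) (pdt F (t, x)) t := aux_hasDerivAt_fst hF t x

lemma pdt_pdx (hF : ContDiff ℝ (⊤ : ℕ∞) F) : pdt (pdx F) = pdx (pdt F) :=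
  funext fun p => aux_schwarz hF p (1, 0) (0, 1)

end pd

theorem sdp_chch_energy_conservation
    (α β : ℝ) (hα : 0 < α) (hβ : 0 < β)
    (u v : ℝ → ℝ → ℝ)
    (hu : ContDiff ℝ (⊤ : ℕ∞) (Function.uncurry u)) (hv : ContDiff ℝ (⊤ : ℕ∞) (Function.uncurry v))
    (huper : ∀ t x : ℝ, u t (x + 2 * π) = u t x)
    (hvper : ∀ t x : ℝ, v t (x + 2 * π) = v t x)
    -- the semidirect product CH–CH system
    (heq₁ : ∀ t x : ℝ,
      deriv (fun s => chMom α u s x) t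
        + deriv (fun y => u t y * chMom α u t y) x
        + deriv (u t) x * chMom α u t x
        + deriv (fun y => v t y * chMom β v t y) x
        + deriv (v t) x * chMom β v t x = 0)
    (heq₂ : ∀ t x : ℝ,
      deriv (fun s => chMom β v s x) t
        + deriv (fun y => (u t y + v t y) * chMom β v t y) x
        + (deriv (u t) x + deriv (v t) x) * chMom β v t x = 0) :
    ∀ t : ℝ, HasDerivAt (chEnergy α β u v) 0 t := by
  intro t₀
  set U : ℝ × ℝ → ℝ := Function.uncurry u with hUdef
  set V : ℝ × ℝ → ℝ := Function.uncurry v with hVdef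
  have hU : ContDiff ℝ (⊤ : ℕ∞) U := hu
  have hV : ContDiff ℝ (⊤ : ℕ∞) V := hv
  have hUx : ContDiff ℝ (⊤ : ℕ∞) (pdx U) := pdx_contDiff hU
  have hVx : ContDiff ℝ (⊤ : ℕ∞) (pdx V) := pdx_contDiff hV
  have hUxx : ContDiff ℝ (⊤ : ℕ∞) (pdx (pdx U)) := pdx_contDiff hUx
  have hVxx : ContDiff ℝ (⊤ : ℕ∞) (pdx (pdx V)) := pdx_contDiff hVx
  have hUt : ContDiff ℝ (⊤ : ℕ∞) (pdt U) := pdt_contDiff hU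
  have hVt : ContDiff ℝ (⊤ : ℕ∞) (pdt V) := pdt_contDiff hV
  have hUtx : ContDiff ℝ (⊤ : ℕ∞) (pdx (pdt U)) := pdx_contDiff hUt
  have hVtx : ContDiff ℝ (⊤ : ℕ∞) (pdx (pdt V)) := pdx_contDiff hVt
  -- derivatives in x
  have hderu : ∀ t, deriv (u t) = fun x => pdx U (t, x) :=
    fun t => funext fun x => (hasDerivAt_pdx hU t x).deriv
  have hderv : ∀ t, deriv (v t) = fun x => pdx V (t, x) :=
    fun t => funext fun x => (hasDerivAt_pdx hV t x).deriv
  have hmomu : ∀ t, chMom α u t = fun y => U (t, y) - α ^ 2 * pdx (pdx U) (t, y) := by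
    intro t
    funext y
    show u t y - α ^ 2 * deriv (deriv (u t)) y = _
    rw [hderu t, (hasDerivAt_pdx hUx t y).deriv]
    rfl
  have hmomv : ∀ t, chMom β v t = fun y => V (t, y) - β ^ 2 * pdx (pdx V) (t, y) := by
    intro t
    funext y
    show v t y - β ^ 2 * deriv (deriv (v t)) y = _
    rw [hderv t, (hasDerivAt_pdx hVx t y).deriv]
    rfl
  -- continuity of basic blocks
  have cU : Continuous U := hU.continuous
  have cV : Continuous V := hV.continuous
  have cUx : Continuous (pdx U) := hUx.continuous
  have cVx : Continuous (pdx V) := hVx.continuous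
  have cUt : Continuous (pdt U) := hUt.continuous
  have cVt : Continuous (pdt V) := hVt.continuous
  have cUtx : Continuous (pdx (pdt U)) := hUtx.continuous
  have cVtx : Continuous (pdx (pdt V)) := hVtx.continuous
  -- the energy density and its time derivative
  set E : ℝ → ℝ → ℝ := fun t x =>
    (1 / 2) * (u t x ^ 2 + α ^ 2 * pdx U (t, x) ^ 2) +
    (1 / 2) * (v t x ^ 2 + β ^ 2 * pdx V (t, x) ^ 2) with hEdef
  set E' : ℝ → ℝ → ℝ := fun t x =>
    u t x * pdt U (t, x) + α ^ 2 * (pdx U (t, x) * pdx (pdt U) (t, x)) +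
    (v t x * pdt V (t, x) + β ^ 2 * (pdx V (t, x) * pdx (pdt V) (t, x))) with hE'def
  have cE : Continuous (Function.uncurry E) := by
    have : Function.uncurry E = fun p : ℝ × ℝ =>
        (1 / 2) * (U p ^ 2 + α ^ 2 * pdx U p ^ 2) +
        (1 / 2) * (V p ^ 2 + β ^ 2 * pdx V p ^ 2) := rfl
    rw [this]
    exact (continuous_const.mul ((cU.pow 2).add (continuous_const.mul (cUx.pow 2)))).add
      (continuous_const.mul ((cV.pow 2).add (continuous_const.mul (cVx.pow 2))))
  have cE' : Continuous (Function.uncurry E') := by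
    have : Function.uncurry E' = fun p : ℝ × ℝ =>
        U p * pdt U p + α ^ 2 * (pdx U p * pdx (pdt U) p) +
        (V p * pdt V p + β ^ 2 * (pdx V p * pdx (pdt V) p)) := rfl
    rw [this]
    exact ((cU.mul cUt).add (continuous_const.mul (cUx.mul cUtx))).add
      ((cV.mul cVt).add (continuous_const.mul (cVx.mul cVtx)))
  -- time derivative of the density
  have hdE : ∀ t x, HasDerivAt (fun s => E s x) (E' t x) t := by
    intro t x
    have h1 : HasDerivAt (fun s => u s x) (pdt U (t, x)) t := hasDerivAt_pdt hU t x
    have h2 : HasDerivAt (fun s => pdx U (s, x)) (pdt (pdx U) (t, x)) t :=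
      hasDerivAt_pdt hUx t x
    have h3 : HasDerivAt (fun s => v s x) (pdt V (t, x)) t := hasDerivAt_pdt hV t x
    have h4 : HasDerivAt (fun s => pdx V (s, x)) (pdt (pdx V) (t, x)) t :=
      hasDerivAt_pdt hVx t x
    rw [pdt_pdx hU] at h2
    rw [pdt_pdx hV] at h4
    have := (((h1.pow 2).add ((h2.pow 2).const_mul (α ^ 2))).const_mul ((1:ℝ)/2)).add
      (((h3.pow 2).add ((h4.pow 2).const_mul (β ^ 2))).const_mul ((1:ℝ)/2))
    refine this.congr_deriv (Eq.symm ?_)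
    simp [hE'def]
    ring
  -- the energy functional as a single integral
  have hE : chEnergy α β u v = fun t => ∫ x in (0:ℝ)..(2 * π), E t x := by
    funext t
    have iA : IntervalIntegrable (fun x => (1/2) * (u t x ^ 2 + α ^ 2 * pdx U (t, x) ^ 2))
        MeasureTheory.volume 0 (2 * π) := by
      apply Continuous.intervalIntegrable
      exact continuous_const.mul (((cU.comp (Continuous.prodMk_right t)).pow 2).add
        (continuous_const.mul ((cUx.comp (Continuous.prodMk_right t)).pow 2)))
    have iB : IntervalIntegrable (fun x => (1/2) * (v t x ^ 2 + β ^ 2 * pdx V (t, x) ^ 2))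
        MeasureTheory.volume 0 (2 * π) := by
      apply Continuous.intervalIntegrable
      exact continuous_const.mul (((cV.comp (Continuous.prodMk_right t)).pow 2).add
        (continuous_const.mul ((cVx.comp (Continuous.prodMk_right t)).pow 2)))
    show chEnergy α β u v t = ∫ x in (0:ℝ)..(2 * π),
      ((1/2) * (u t x ^ 2 + α ^ 2 * pdx U (t, x) ^ 2) +
       (1/2) * (v t x ^ 2 + β ^ 2 * pdx V (t, x) ^ 2))
    rw [intervalIntegral.integral_add iA iB, intervalIntegral.integral_const_mul,
      intervalIntegral.integral_const_mul]
    show (1 / 2) * (∫ x in (0:ℝ)..(2 * π), (u t x ^ 2 + α ^ 2 * (deriv (u t) x) ^ 2)) +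
      (1 / 2) * (∫ x in (0:ℝ)..(2 * π), (v t x ^ 2 + β ^ 2 * (deriv (v t) x) ^ 2)) = _
    rw [hderu t, hderv t]
  -- derivative of the energy
  have hmain : HasDerivAt (chEnergy α β u v) (∫ x in (0:ℝ)..(2 * π), E' t₀ x) t₀ := by
    rw [hE]
    exact aux_param_deriv cE cE' hdE t₀
  -- x-derivative of the momenta at time t₀
  have hmxu : ∀ x, HasDerivAt (fun y => chMom α u t₀ y)
      (pdx U (t₀, x) - α ^ 2 * pdx (pdx (pdx U)) (t₀, x)) x := by
    intro x
    simp only [hmomu t₀]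
    exact (hasDerivAt_pdx hU t₀ x).sub ((hasDerivAt_pdx hUxx t₀ x).const_mul (α ^ 2))
  have hmxv : ∀ x, HasDerivAt (fun y => chMom β v t₀ y)
      (pdx V (t₀, x) - β ^ 2 * pdx (pdx (pdx V)) (t₀, x)) x := by
    intro x
    simp only [hmomv t₀]
    exact (hasDerivAt_pdx hV t₀ x).sub ((hasDerivAt_pdx hVxx t₀ x).const_mul (β ^ 2))
  -- the flux function
  set Φ : ℝ → ℝ := fun y =>
    α ^ 2 * (U (t₀, y) * pdx (pdt U) (t₀, y)) + β ^ 2 * (V (t₀, y) * pdx (pdt V) (t₀, y))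
    - U (t₀, y) ^ 2 * chMom α u t₀ y
    - (2 * U (t₀, y) * V (t₀, y) + V (t₀, y) ^ 2) * chMom β v t₀ y with hΦdef
  have hval : ∀ t x, u t x = U (t, x) := fun _ _ => rfl
  have hvalv : ∀ t x, v t x = V (t, x) := fun _ _ => rfl
  have hΦ' : ∀ x, HasDerivAt Φ (E' t₀ x) x := by
    intro x
    have h := ((((hasDerivAt_pdx hU t₀ x).mul (hasDerivAt_pdx hUtx t₀ x)).const_mul (α ^ 2)).add
        (((hasDerivAt_pdx hV t₀ x).mul (hasDerivAt_pdx hVtx t₀ x)).const_mul (β ^ 2))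
      |>.sub (((hasDerivAt_pdx hU t₀ x).pow 2).mul (hmxu x))
      |>.sub (((((hasDerivAt_pdx hU t₀ x).const_mul 2).mul (hasDerivAt_pdx hV t₀ x)).add
        ((hasDerivAt_pdx hV t₀ x).pow 2)).mul (hmxv x)))
    rw [hΦdef]
    refine h.congr_deriv (Eq.symm ?_)
    -- the PDE at (t₀, x)
    have h1 := heq₁ t₀ x
    have h2 := heq₂ t₀ x
    have e1 : deriv (fun s => chMom α u s x) t₀
        = pdt U (t₀, x) - α ^ 2 * pdx (pdx (pdt U)) (t₀, x) := by
      have hf : (fun s => chMom α u s x) = fun s => U (s, x) - α ^ 2 * pdx (pdx U) (s, x) :=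
        funext fun s => congrFun (hmomu s) x
      rw [hf, ((hasDerivAt_pdt hU t₀ x).fun_sub
        ((hasDerivAt_pdt hUxx t₀ x).const_mul (α ^ 2))).deriv, pdt_pdx hUx, pdt_pdx hU]
    have f1 : deriv (fun s => chMom β v s x) t₀
        = pdt V (t₀, x) - β ^ 2 * pdx (pdx (pdt V)) (t₀, x) := by
      have hf : (fun s => chMom β v s x) = fun s => V (s, x) - β ^ 2 * pdx (pdx V) (s, x) :=
        funext fun s => congrFun (hmomv s) x
      rw [hf, ((hasDerivAt_pdt hV t₀ x).fun_sub
        ((hasDerivAt_pdt hVxx t₀ x).const_mul (β ^ 2))).deriv, pdt_pdx hVx, pdt_pdx hV]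
    have e2 : deriv (fun y => u t₀ y * chMom α u t₀ y) x
        = pdx U (t₀, x) * chMom α u t₀ x
          + U (t₀, x) * (pdx U (t₀, x) - α ^ 2 * pdx (pdx (pdx U)) (t₀, x)) :=
      ((hasDerivAt_pdx hU t₀ x).mul (hmxu x)).deriv
    have e4 : deriv (fun y => v t₀ y * chMom β v t₀ y) x
        = pdx V (t₀, x) * chMom β v t₀ x
          + V (t₀, x) * (pdx V (t₀, x) - β ^ 2 * pdx (pdx (pdx V)) (t₀, x)) :=
      ((hasDerivAt_pdx hV t₀ x).mul (hmxv x)).deriv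
    have f2 : deriv (fun y => (u t₀ y + v t₀ y) * chMom β v t₀ y) x
        = (pdx U (t₀, x) + pdx V (t₀, x)) * chMom β v t₀ x
          + (U (t₀, x) + V (t₀, x)) * (pdx V (t₀, x) - β ^ 2 * pdx (pdx (pdx V)) (t₀, x)) :=
      (((hasDerivAt_pdx hU t₀ x).add (hasDerivAt_pdx hV t₀ x)).mul (hmxv x)).deriv
    have e3 : deriv (u t₀) x = pdx U (t₀, x) := congrFun (hderu t₀) x
    have e5 : deriv (v t₀) x = pdx V (t₀, x) := congrFun (hderv t₀) x
    rw [e1, e2, e3, e4, e5] at h1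
    rw [f1, f2, e3, e5] at h2
    simp only [hE'def, hval, hvalv, Pi.pow_apply, Pi.mul_apply, Pi.add_apply]
    linear_combination (U (t₀, x)) * h1 + (V (t₀, x)) * h2
  -- periodicity of all ingredients
  have pu : ∀ y, U (t₀, y + 2 * π) = U (t₀, y) := huper t₀
  have pv : ∀ y, V (t₀, y + 2 * π) = V (t₀, y) := hvper t₀
  have pux : ∀ y, pdx U (t₀, y + 2 * π) = pdx U (t₀, y) :=
    aux_periodic_deriv (fun y => hasDerivAt_pdx hU t₀ y) pu
  have pvx : ∀ y, pdx V (t₀, y + 2 * π) = pdx V (t₀, y) :=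
    aux_periodic_deriv (fun y => hasDerivAt_pdx hV t₀ y) pv
  have puxx : ∀ y, pdx (pdx U) (t₀, y + 2 * π) = pdx (pdx U) (t₀, y) :=
    aux_periodic_deriv (fun y => hasDerivAt_pdx hUx t₀ y) pux
  have pvxx : ∀ y, pdx (pdx V) (t₀, y + 2 * π) = pdx (pdx V) (t₀, y) :=
    aux_periodic_deriv (fun y => hasDerivAt_pdx hVx t₀ y) pvx
  have put : ∀ y, pdt U (t₀, y + 2 * π) = pdt U (t₀, y) := by
    intro y
    rw [← (hasDerivAt_pdt hU t₀ (y + 2 * π)).deriv, ← (hasDerivAt_pdt hU t₀ y).deriv]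
    congr 1
    funext s
    exact huper s y
  have pvt : ∀ y, pdt V (t₀, y + 2 * π) = pdt V (t₀, y) := by
    intro y
    rw [← (hasDerivAt_pdt hV t₀ (y + 2 * π)).deriv, ← (hasDerivAt_pdt hV t₀ y).deriv]
    congr 1
    funext s
    exact hvper s y
  have putx : ∀ y, pdx (pdt U) (t₀, y + 2 * π) = pdx (pdt U) (t₀, y) :=
    aux_periodic_deriv (fun y => hasDerivAt_pdx hUt t₀ y) put
  have pvtx : ∀ y, pdx (pdt V) (t₀, y + 2 * π) = pdx (pdt V) (t₀, y) :=
    aux_periodic_deriv (fun y => hasDerivAt_pdx hVt t₀ y) pvt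
  have pm : ∀ y, chMom α u t₀ (y + 2 * π) = chMom α u t₀ y := by
    intro y
    simp only [hmomu t₀, pu, puxx]
  have pn : ∀ y, chMom β v t₀ (y + 2 * π) = chMom β v t₀ y := by
    intro y
    simp only [hmomv t₀, pv, pvxx]
  have hper : Φ (2 * π) = Φ 0 := by
    have h0 : Φ (0 + 2 * π) = Φ 0 := by
      simp only [hΦdef, pu, pv, putx, pvtx, pm, pn]
    rw [← h0]
    norm_num
  have cE't : Continuous (fun x => E' t₀ x) := cE'.comp (Continuous.prodMk_right t₀)
  have hkey : (∫ x in (0:ℝ)..(2 * π), E' t₀ x) = 0 := by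
    rw [intervalIntegral.integral_eq_sub_of_hasDerivAt (fun x _ => hΦ' x)
      (cE't.intervalIntegrable _ _), hper, sub_self]
  rw [hkey] at hmain
  exact hmain
end
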